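/- Let K be a valued difference field satisfying Axiom 4_n, let G be a σ-polynomial over the valuation ring O of order ≤ n, and let a ∈ O be such that G is σ-henselian at a and G(a) ≠ 0. Then there is b ∈ O such that v(a − b) ≥ v(G(a)) and v(G(b)) > v(G(a)). Moreover, for any such b one has v(a − b) = v(G(a)), and G is σ-henselian at b. -/

import Mathlib

/-!
Common definitions: three-sorted valued (difference) fields, σ-polynomials,
pc-sequences, axioms from the paper.
-/

namespace VDFPaper

universe u v w

/-- A valued field, presented as a three-sorted structure `(K, Γ, k; v, π)`.
The valuation is extended to `v : K → WithTop Γ` with `v 0 = ⊤`, and the residue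
map `π : O → k` is extended to all of `K` by `0` outside the valuation ring. -/
structure ValuedField (K : Type u) (Γ : Type v) (k : Type w)
    [Field K] [AddCommGroup Γ] [LinearOrder Γ] [IsOrderedAddMonoid Γ] [Field k] where
  v : K → WithTop Γ
  π : K → k
  v_top_iff : ∀ a : K, v a = ⊤ ↔ a = 0
  v_mul : ∀ a b : K, v (a * b) = v a + v b
  v_add : ∀ a b : K, min (v a) (v b) ≤ v (a + b)
  v_surj : ∀ γ : Γ, ∃ a : K, v a = (γ : WithTop Γ)
  π_add : ∀ a b : K, 0 ≤ v a → 0 ≤ v b → π (a + b) = π a + π b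
  π_mul : ∀ a b : K, 0 ≤ v a → 0 ≤ v b → π (a * b) = π a * π b
  π_one : π 1 = 1
  π_surj : Function.Surjective π
  π_eq_zero_iff : ∀ a : K, 0 ≤ v a → (π a = 0 ↔ 0 < v a)
  π_junk : ∀ a : K, ¬ 0 ≤ v a → π a = 0

/-- A valued difference field (satisfying Axiom 1: `v (σ a) = v a`);
`σr` is the induced automorphism of the residue field. -/
structure ValuedDiffField (K : Type u) (Γ : Type v) (k : Type w)
    [Field K] [AddCommGroup Γ] [LinearOrder Γ] [IsOrderedAddMonoid Γ] [Field k]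
    extends ValuedField K Γ k where
  σ : K ≃+* K
  σr : k ≃+* k
  v_σ : ∀ a : K, v (σ a) = v a
  π_σ : ∀ a : K, π (σ a) = σr (π a)

/-- `iterEquiv s m` is the `m`-th iterate (`m : ℤ`) of the automorphism `s`. -/
def iterEquiv {R : Type*} [Mul R] [Add R] (s : R ≃+* R) : ℤ → R → R
  | Int.ofNat m => (⇑s)^[m]
  | Int.negSucc m => (⇑s.symm)^[m + 1]

/-- Evaluation of the σ-polynomial `f(x, σ x, …, σⁿ x)` at `a`. -/
noncomputable def evalDiff {R : Type*} [CommSemiring R] (s : R → R) {n : ℕ}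
    (f : MvPolynomial (Fin (n + 1)) R) (a : R) : R :=
  MvPolynomial.eval (fun i : Fin (n + 1) => s^[(i : ℕ)] a) f

/-- The Taylor coefficient `f_(i)` (Hasse derivative), characterized by
`f(x+y) = Σ_i f_(i)(x) · y^i`. -/
noncomputable def taylorCoeff {R : Type*} [CommRing R] {n : ℕ}
    (i : Fin (n + 1) →₀ ℕ) (f : MvPolynomial (Fin (n + 1)) R) :
    MvPolynomial (Fin (n + 1)) R :=
  ∑ d ∈ f.support,
    MvPolynomial.monomial (d - i)
      ((∏ j ∈ d.support ∪ i.support, ((d j).choose (i j) : R)) * f.coeff d)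

/-- Apply a (not necessarily ring-hom) map to all coefficients; used for
reduction of σ-polynomials over the valuation ring to the residue field. -/
noncomputable def mapCoeffs {R S : Type*} [CommSemiring R] [CommSemiring S]
    (π : R → S) {n : ℕ} (f : MvPolynomial (Fin (n + 1)) R) :
    MvPolynomial (Fin (n + 1)) S :=
  ∑ d ∈ f.support, MvPolynomial.monomial d (π (f.coeff d))

/-- `|j| = j₀ + ⋯ + jₙ` for a multi-index. -/
def degSum {n : ℕ} (j : Fin (n + 1) →₀ ℕ) : ℕ := j.sum fun _ e => e

/-- The order of a σ-polynomial: the largest `i` such that `σ^i x` occurs. -/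
def sigmaOrder {R : Type*} [CommSemiring R] {n : ℕ}
    (f : MvPolynomial (Fin (n + 1)) R) : ℕ :=
  f.support.sup fun d => d.support.sup fun j => (j : ℕ)

lemma sigmaOrder_le {R : Type*} [CommSemiring R] {n : ℕ}
    (f : MvPolynomial (Fin (n + 1)) R) : sigmaOrder f ≤ n :=
  Finset.sup_le fun d _ => Finset.sup_le fun j _ => Nat.lt_succ_iff.mp j.isLt

/-- Complexity of a σ-polynomial: `(order + 1, degree in σ^order x, total degree)`
for nonconstant ones, `(0,0,0)` for constants (so constants are of lower
complexity than all nonconstant σ-polynomials, as in the paper). -/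
noncomputable def sigmaComplexity {R : Type*} [CommSemiring R] {n : ℕ}
    (f : MvPolynomial (Fin (n + 1)) R) : ℕ × ℕ × ℕ :=
  if f.totalDegree = 0 then (0, 0, 0)
  else (sigmaOrder f + 1,
    MvPolynomial.degreeOf (⟨sigmaOrder f, Nat.lt_succ_of_le (sigmaOrder_le f)⟩ : Fin (n + 1)) f,
    f.totalDegree)

/-- Lexicographic order on complexities. -/
def TripleLT (a b : ℕ × ℕ × ℕ) : Prop :=
  a.1 < b.1 ∨ (a.1 = b.1 ∧ (a.2.1 < b.2.1 ∨ (a.2.1 = b.2.1 ∧ a.2.2 < b.2.2)))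

/-- `α` is σ-transcendental over the difference subfield given by `φ : E →+* F`,
where `s` is the difference operator of `F`. -/
def SigmaTranscendentalOver {E F : Type*} [Field E] [Field F]
    (φ : E →+* F) (s : F → F) (α : F) : Prop :=
  ∀ (n : ℕ) (f : MvPolynomial (Fin (n + 1)) E), f ≠ 0 →
    evalDiff s (MvPolynomial.map φ f) α ≠ 0

/-- `g` is a minimal σ-polynomial of `α` over the difference subfield `φ : E →+* F`. -/
def IsMinimalSigmaPolyOver {E F : Type*} [Field E] [Field F]
    (φ : E →+* F) (s : F → F) {n : ℕ} (g : MvPolynomial (Fin (n + 1)) E) (α : F) : Prop :=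
  g ≠ 0 ∧ evalDiff s (MvPolynomial.map φ g) α = 0 ∧
    ∀ (m : ℕ) (h : MvPolynomial (Fin (m + 1)) E), h ≠ 0 →
      TripleLT (sigmaComplexity h) (sigmaComplexity g) →
      evalDiff s (MvPolynomial.map φ h) α ≠ 0

/-- The difference subfield `E⟨a⟩` generated over `S = E` by `a`:
the subfield generated by `S` together with all `σ^m a`, `m : ℤ`. -/
def genDiffSubfield {F : Type*} [Field F] (s : F ≃+* F) (S : Set F) (a : F) : Subfield F :=
  Subfield.closure (S ∪ Set.range fun m : ℤ => iterEquiv s m a)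

/-- An embedding of valued fields (three-sorted). -/
structure ValEmbedding {K₁ Γ₁ k₁ K₂ Γ₂ k₂ : Type*}
    [Field K₁] [AddCommGroup Γ₁] [LinearOrder Γ₁] [IsOrderedAddMonoid Γ₁] [Field k₁]
    [Field K₂] [AddCommGroup Γ₂] [LinearOrder Γ₂] [IsOrderedAddMonoid Γ₂] [Field k₂]
    (M₁ : ValuedField K₁ Γ₁ k₁) (M₂ : ValuedField K₂ Γ₂ k₂) where
  toField : K₁ →+* K₂
  toGroup : Γ₁ → Γ₂
  toGroup_add : ∀ x y : Γ₁, toGroup (x + y) = toGroup x + toGroup y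
  toGroup_mono : StrictMono toGroup
  comm_v : ∀ a : K₁, M₂.v (toField a) = WithTop.map toGroup (M₁.v a)
  toRes : k₁ →+* k₂
  comm_π : ∀ a : K₁, 0 ≤ M₁.v a → M₂.π (toField a) = toRes (M₁.π a)

/-- An embedding (extension) of valued difference fields. -/
structure VDFEmbedding {K₁ Γ₁ k₁ K₂ Γ₂ k₂ : Type*}
    [Field K₁] [AddCommGroup Γ₁] [LinearOrder Γ₁] [IsOrderedAddMonoid Γ₁] [Field k₁]
    [Field K₂] [AddCommGroup Γ₂] [LinearOrder Γ₂] [IsOrderedAddMonoid Γ₂] [Field k₂]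
    (M₁ : ValuedDiffField K₁ Γ₁ k₁) (M₂ : ValuedDiffField K₂ Γ₂ k₂)
    extends ValEmbedding M₁.toValuedField M₂.toValuedField where
  comm_σ : ∀ a : K₁, toField (M₁.σ a) = M₂.σ (toField a)

/-- An extension is immediate if it induces bijections on value groups and residue fields. -/
def ValEmbedding.IsImmediate {K₁ Γ₁ k₁ K₂ Γ₂ k₂ : Type*}
    [Field K₁] [AddCommGroup Γ₁] [LinearOrder Γ₁] [IsOrderedAddMonoid Γ₁] [Field k₁]
    [Field K₂] [AddCommGroup Γ₂] [LinearOrder Γ₂] [IsOrderedAddMonoid Γ₂] [Field k₂]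
    {M₁ : ValuedField K₁ Γ₁ k₁} {M₂ : ValuedField K₂ Γ₂ k₂}
    (E : ValEmbedding M₁ M₂) : Prop :=
  Function.Surjective E.toGroup ∧ Function.Surjective E.toRes

def VDFEmbedding.IsImmediate {K₁ Γ₁ k₁ K₂ Γ₂ k₂ : Type*}
    [Field K₁] [AddCommGroup Γ₁] [LinearOrder Γ₁] [IsOrderedAddMonoid Γ₁] [Field k₁]
    [Field K₂] [AddCommGroup Γ₂] [LinearOrder Γ₂] [IsOrderedAddMonoid Γ₂] [Field k₂]
    {M₁ : ValuedDiffField K₁ Γ₁ k₁} {M₂ : ValuedDiffField K₂ Γ₂ k₂}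
    (E : VDFEmbedding M₁ M₂) : Prop :=
  E.toValEmbedding.IsImmediate

section Pc

variable {K : Type u} {Γ : Type v} {k : Type w}
variable [Field K] [AddCommGroup Γ] [LinearOrder Γ] [IsOrderedAddMonoid Γ] [Field k]

/-- A pc-sequence (pseudo-Cauchy sequence). The index type is assumed to be a
nonempty well-ordered set without greatest element where this matters. -/
def IsPcSeq {I : Type*} [LinearOrder I] (v : K → WithTop Γ) (a : I → K) : Prop :=
  ∃ ρ₀ : I, ∀ ρ ρ' ρ'' : I, ρ₀ ≤ ρ → ρ < ρ' → ρ' < ρ'' →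
    v (a ρ' - a ρ) < v (a ρ'' - a ρ')

/-- `a_ρ ⤳ x` : the sequence `a` pseudoconverges to `x`, i.e. `v (x - a_ρ)` is
eventually strictly increasing. -/
def PseudoLim {I : Type*} [LinearOrder I] (v : K → WithTop Γ) (a : I → K) (x : K) : Prop :=
  ∃ ρ₀ : I, ∀ ρ ρ' : I, ρ₀ ≤ ρ → ρ < ρ' → v (x - a ρ) < v (x - a ρ')

/-- Two pc-sequences are equivalent: they have the same pseudolimits in every
valued field extension. -/
def PcEquiv (M : ValuedField K Γ k) {I : Type*} [LinearOrder I] (a b : I → K) : Prop :=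
  ∀ (K' : Type u) (Γ' : Type v) (k' : Type w)
    [Field K'] [AddCommGroup Γ'] [LinearOrder Γ'] [IsOrderedAddMonoid Γ'] [Field k']
    (M' : ValuedField K' Γ' k') (E : ValEmbedding M M') (x : K'),
    PseudoLim M'.v (fun ρ => E.toField (a ρ)) x ↔
    PseudoLim M'.v (fun ρ => E.toField (b ρ)) x

end Pc

section Axioms

variable {K : Type u} {Γ : Type v} {k : Type w}
variable [Field K] [AddCommGroup Γ] [LinearOrder Γ] [IsOrderedAddMonoid Γ] [Field k]

/-- Axiom 2: every value is the value of an element of the fixed field. -/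
def Axiom2 (M : ValuedDiffField K Γ k) : Prop :=
  ∀ γ : Γ, ∃ a : K, M.σ a = a ∧ M.v a = (γ : WithTop Γ)

/-- Axiom 3 (a scheme about the residue difference field). -/
def Axiom3 (M : ValuedDiffField K Γ k) : Prop :=
  (∀ d : ℕ, 0 < d → ∃ y : k, (⇑M.σr)^[d] y ≠ y) ∧
  (∀ p : ℕ, p.Prime → ringChar k = p →
    ∀ d : ℤ, d ≠ 0 → ∀ e : ℕ, 0 < e → ∃ y : k, iterEquiv M.σr d y ≠ y ^ p ^ e)

/-- Axiom 4ₙ: solvability in the residue field of inhomogeneous linear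
σ̄-equations of order ≤ n. -/
def Axiom4n (M : ValuedDiffField K Γ k) (n : ℕ) : Prop :=
  ∀ α : Fin (n + 1) → k, (∃ i, α i ≠ 0) →
    ∃ y : k, 1 + ∑ i : Fin (n + 1), α i * (⇑M.σr)^[(i : ℕ)] y = 0

def Axiom4 (M : ValuedDiffField K Γ k) : Prop := ∀ n : ℕ, Axiom4n M n

/-- The Witt case for the prime `p`. -/
def WittCase (M : ValuedDiffField K Γ k) (p : ℕ) : Prop :=
  p.Prime ∧ ringChar K = 0 ∧ ringChar k = p ∧ PerfectField k ∧
  (∃ e : Γ, 0 < e ∧ (∀ γ : Γ, 0 < γ → e ≤ γ) ∧ M.v (p : K) = (e : WithTop Γ)) ∧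
  ∀ y : k, M.σr y = y ^ p

/-- Finitely ramified valued (difference) field. -/
def FinitelyRamified (M : ValuedDiffField K Γ k) : Prop :=
  ringChar K = 0 ∧ ∀ p : ℕ, p.Prime → ringChar k = p →
    {γ : Γ | 0 < γ ∧ (γ : WithTop Γ) < M.v (p : K)}.Finite

/-- Workable: Axioms 2 and 3, or Axiom 2 and a Witt case with infinite residue field. -/
def Workable (M : ValuedDiffField K Γ k) : Prop :=
  (Axiom2 M ∧ Axiom3 M) ∨ (Axiom2 M ∧ ∃ p : ℕ, WittCase M p ∧ Infinite k)

/-- All coefficients lie in the valuation ring. -/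
def CoeffsInO (M : ValuedField K Γ k) {n : ℕ} (f : MvPolynomial (Fin (n + 1)) K) : Prop :=
  ∀ d : Fin (n + 1) →₀ ℕ, 0 ≤ M.v (f.coeff d)

/-- `min_{|i| = 1} v (G_(i) (a))`. -/
noncomputable def vG1min (M : ValuedDiffField K Γ k) {n : ℕ}
    (f : MvPolynomial (Fin (n + 1)) K) (a : K) : WithTop Γ :=
  Finset.univ.inf fun i : Fin (n + 1) =>
    M.v (evalDiff (⇑M.σ) (taylorCoeff (Finsupp.single i 1) f) a)

/-- `G` is σ-henselian at `a` (with `G` over `O` and `a ∈ O`). -/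
def SigmaHenselAt (M : ValuedDiffField K Γ k) {n : ℕ}
    (f : MvPolynomial (Fin (n + 1)) K) (a : K) : Prop :=
  0 < M.v (evalDiff (⇑M.σ) f a) ∧ vG1min M f a = 0

/-- `K` is σ-henselian. -/
def SigmaHenselian (M : ValuedDiffField K Γ k) : Prop :=
  ∀ (n : ℕ) (f : MvPolynomial (Fin (n + 1)) K), CoeffsInO M.toValuedField f →
    ∀ a : K, 0 ≤ M.v a → SigmaHenselAt M f a →
      ∃ b : K, evalDiff (⇑M.σ) f b = 0 ∧ M.v (evalDiff (⇑M.σ) f a) ≤ M.v (a - b)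

/-- `(G, a)` is in σ-hensel configuration. -/
def HenselConfig (M : ValuedDiffField K Γ k) {n : ℕ}
    (f : MvPolynomial (Fin (n + 1)) K) (a : K) : Prop :=
  (∃ i : Fin (n + 1), evalDiff (⇑M.σ) (taylorCoeff (Finsupp.single i 1) f) a ≠ 0) ∧
  (evalDiff (⇑M.σ) f a = 0 ∨ ∃ γ : Γ,
    M.v (evalDiff (⇑M.σ) f a) = vG1min M f a + (γ : WithTop Γ) ∧
    ∀ j : Fin (n + 1) →₀ ℕ, 1 < degSum j →
      M.v (evalDiff (⇑M.σ) f a) <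
        M.v (evalDiff (⇑M.σ) (taylorCoeff j f) a) + degSum j • (γ : WithTop Γ))

/-- The pc-sequence `a` is of σ-algebraic type over `K`. -/
def OfSigmaAlgebraicType (M : ValuedDiffField K Γ k) {I : Type*} [LinearOrder I]
    (a : I → K) : Prop :=
  ∃ (n : ℕ) (G : MvPolynomial (Fin (n + 1)) K) (b : I → K),
    IsPcSeq M.v b ∧ PcEquiv M.toValuedField a b ∧
    PseudoLim M.v (fun ρ => evalDiff (⇑M.σ) G (b ρ)) 0

/-- The pc-sequence `a` is of σ-transcendental type over `K`. -/
def OfSigmaTranscendentalType (M : ValuedDiffField K Γ k) {I : Type*} [LinearOrder I]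
    (a : I → K) : Prop :=
  ∀ (n : ℕ) (G : MvPolynomial (Fin (n + 1)) K) (b : I → K),
    IsPcSeq M.v b → PcEquiv M.toValuedField a b →
    ¬ PseudoLim M.v (fun ρ => evalDiff (⇑M.σ) G (b ρ)) 0

/-- `G` is a minimal σ-polynomial of the pc-sequence `a` over `K`. -/
def IsMinPolyOfPcSeq (M : ValuedDiffField K Γ k) {I : Type*} [LinearOrder I]
    (a : I → K) {n : ℕ} (G : MvPolynomial (Fin (n + 1)) K) : Prop :=
  (∃ b : I → K, IsPcSeq M.v b ∧ PcEquiv M.toValuedField a b ∧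
    PseudoLim M.v (fun ρ => evalDiff (⇑M.σ) G (b ρ)) 0) ∧
  ∀ (m : ℕ) (H : MvPolynomial (Fin (m + 1)) K),
    TripleLT (sigmaComplexity H) (sigmaComplexity G) →
    ∀ b : I → K, IsPcSeq M.v b → PcEquiv M.toValuedField a b →
      ¬ PseudoLim M.v (fun ρ => evalDiff (⇑M.σ) H (b ρ)) 0

end Axioms

/-- A bundled extension of a valued field (with prescribed value-group and
residue sorts). -/
structure ValuedFieldExt {K : Type u} {Γ : Type v} {k : Type w}
    [Field K] [AddCommGroup Γ] [LinearOrder Γ] [IsOrderedAddMonoid Γ] [Field k]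
    (M : ValuedField K Γ k) (Γ' : Type v) (k' : Type w)
    [AddCommGroup Γ'] [LinearOrder Γ'] [IsOrderedAddMonoid Γ'] [Field k'] where
  carrier : Type u
  [fieldInst : Field carrier]
  str : ValuedField carrier Γ' k'
  emb : ValEmbedding M str

attribute [instance] ValuedFieldExt.fieldInst

/-- A bundled extension of a valued difference field. -/
structure VDFExt {K : Type u} {Γ : Type v} {k : Type w}
    [Field K] [AddCommGroup Γ] [LinearOrder Γ] [IsOrderedAddMonoid Γ] [Field k]
    (M : ValuedDiffField K Γ k) (Γ' : Type v) (k' : Type w)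
    [AddCommGroup Γ'] [LinearOrder Γ'] [IsOrderedAddMonoid Γ'] [Field k'] where
  carrier : Type u
  [fieldInst : Field carrier]
  str : ValuedDiffField carrier Γ' k'
  emb : VDFEmbedding M str

attribute [instance] VDFExt.fieldInst

section Max

variable {K : Type u} {Γ : Type v} {k : Type w}
variable [Field K] [AddCommGroup Γ] [LinearOrder Γ] [IsOrderedAddMonoid Γ] [Field k]

/-- Maximal valued field: no proper immediate valued field extension. -/
def MaximalValuedField (M : ValuedField K Γ k) : Prop :=
  ¬ ∃ Ext : ValuedFieldExt M Γ k,
      Ext.emb.IsImmediate ∧ ¬ Function.Surjective Ext.emb.toField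

/-- Maximal valued difference field: no proper immediate extension. -/
def MaximalVDF (M : ValuedDiffField K Γ k) : Prop :=
  ¬ ∃ Ext : VDFExt M Γ k,
      Ext.emb.IsImmediate ∧ ¬ Function.Surjective Ext.emb.toField

/-- Every element of the extension is σ-algebraic over the ground field. -/
def SigmaAlgebraicExt {Γ' : Type v} {k' : Type w}
    [AddCommGroup Γ'] [LinearOrder Γ'] [IsOrderedAddMonoid Γ'] [Field k']
    {M : ValuedDiffField K Γ k} (Ext : VDFExt M Γ' k') : Prop :=
  ∀ x : Ext.carrier, ∃ (n : ℕ) (f : MvPolynomial (Fin (n + 1)) K), f ≠ 0 ∧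
    evalDiff (⇑Ext.str.σ) (MvPolynomial.map Ext.emb.toField f) x = 0

/-- σ-algebraically maximal: no proper immediate σ-algebraic extension. -/
def SigmaAlgMaximal (M : ValuedDiffField K Γ k) : Prop :=
  ¬ ∃ Ext : VDFExt M Γ k,
      Ext.emb.IsImmediate ∧ SigmaAlgebraicExt Ext ∧
      ¬ Function.Surjective Ext.emb.toField

/-- Complete with a discrete valuation. -/
def CompleteDiscrete (M : ValuedField K Γ k) : Prop :=
  (∃ e : Γ ≃o ℤ, ∀ x y : Γ, e (x + y) = e x + e y) ∧
  ∀ u : ℕ → K,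
    (∀ γ : Γ, ∃ N : ℕ, ∀ m n : ℕ, N ≤ m → N ≤ n → m ≠ n →
      (γ : WithTop Γ) < M.v (u m - u n)) →
    ∃ x : K, ∀ γ : Γ, ∃ N : ℕ, ∀ n : ℕ, N ≤ n → (γ : WithTop Γ) < M.v (x - u n)

end Max

/-- `g` is an isomorphism of difference fields `A → A'` over `E`
(via `φ : E → F`, `φ' : E → F'`) sending `a` to `b`; `s, s'` are the difference
operators of the ambient fields. -/
def IsDiffIsoOver {E F F' : Type*} [Field E] [Field F] [Field F']
    (φ : E →+* F) (φ' : E →+* F') (s : F → F) (s' : F' → F')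
    (A : Subfield F) (A' : Subfield F') (a : F) (b : F') (g : A →+* F') : Prop :=
  (Set.range fun x : A => g x) = (A' : Set F') ∧
  (∀ (e : E) (he : φ e ∈ A), g ⟨φ e, he⟩ = φ' e) ∧
  (∀ ha : a ∈ A, g ⟨a, ha⟩ = b) ∧
  (∀ (x : A) (hx : s (x : F) ∈ A), g ⟨s (x : F), hx⟩ = s' (g x))

/-- As `IsDiffIsoOver`, and moreover valuation-preserving. -/
def IsValDiffIsoOver {E F F' : Type*} {Γ Γ' : Type*} [Field E] [Field F] [Field F']
    [AddCommGroup Γ] [LinearOrder Γ] [IsOrderedAddMonoid Γ] [AddCommGroup Γ'] [LinearOrder Γ'] [IsOrderedAddMonoid Γ']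
    (v : F → WithTop Γ) (v' : F' → WithTop Γ')
    (φ : E →+* F) (φ' : E →+* F') (s : F → F) (s' : F' → F')
    (A : Subfield F) (A' : Subfield F') (a : F) (b : F') (g : A →+* F') : Prop :=
  IsDiffIsoOver φ φ' s s' A A' a b g ∧
  ∀ x y : A, v (x : F) ≤ v (y : F) ↔ v' (g x) ≤ v' (g y)

/-- The `D`-transform substitution: `F(x₀,…,xₙ) ↦ F(W₀(y), …, Wₙ(y))` where
`W_j(y) = y₀^{p^j} + p y₁^{p^{j-1}} + ⋯ + p^j y_j`. -/
noncomputable def Dtransform (p : ℕ) {R : Type*} [CommSemiring R] {n : ℕ}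
    (F : MvPolynomial (Fin (n + 1)) R) : MvPolynomial (Fin (n + 1)) R :=
  MvPolynomial.bind₁ (fun j : Fin (n + 1) =>
    ∑ i : Fin (n + 1), if (i : ℕ) ≤ (j : ℕ) then
      MvPolynomial.C ((p : R) ^ (i : ℕ)) * MvPolynomial.X i ^ p ^ ((j : ℕ) - (i : ℕ))
    else 0) F

/-- The initial segment of the ordinals below `lam`, used as a well-ordered
index set. -/
abbrev OrdSeg (lam : Ordinal.{0}) : Type 1 := {o : Ordinal.{0} // o < lam}

/-!
Taylor expansion gives `G(a + c) = G(a) + ∑ₗ G_(eₗ)(a) σˡ(c) + r` with `v r ≥ 2 v c` whenever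
`a, c ∈ O`. For `c = G(a) u` the linear part is `G(a) ∑ₗ βₗ σˡ(u)`, where
`βₗ = G_(eₗ)(a) σˡ(G(a)) / G(a)` has the same value as `G_(eₗ)(a)`. By σ-henselianity some `βₗ`
is a unit, so Axiom 4ₙ yields `u ∈ O` with `1 + ∑ₗ βₗ σˡ(u) ∈ m`, and then
`v G(a + c) > v G(a)`. Conversely the same expansion gives `v (G(b) - G(a)) ≥ v (b - a)`; this
forces `v (a - b) = v G(a)` for every such `b` and, applied to the `G_(eₗ)`, shows that
`G_(eₗ)(b) ≡ G_(eₗ)(a)` modulo `m`.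
-/

section Taylor

open MvPolynomial

variable {R : Type*} [CommRing R] {n : ℕ}

lemma prod_choose_union_eq_prod_univ (d i : Fin (n + 1) →₀ ℕ) :
    ∏ j ∈ d.support ∪ i.support, ((d j).choose (i j) : R) = ∏ j, ((d j).choose (i j) : R) := by
  refine Finset.prod_subset (Finset.subset_univ _) fun j _ hj => ?_
  simp only [Finset.mem_union, Finsupp.mem_support_iff, not_or, not_not] at hj
  simp [hj.1, hj.2]

lemma eval_taylorCoeff (i : Fin (n + 1) →₀ ℕ) (f : MvPolynomial (Fin (n + 1)) R)
    (x : Fin (n + 1) → R) :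
    eval x (taylorCoeff i f) = ∑ d ∈ f.support,
      (∏ j, ((d j).choose (i j) : R)) * f.coeff d * ∏ j, x j ^ (d j - i j) := by
  rw [taylorCoeff, map_sum]
  refine Finset.sum_congr rfl fun d _ => ?_
  rw [eval_monomial, prod_choose_union_eq_prod_univ,
    Finsupp.prod_fintype _ _ fun j => pow_zero _]
  simp only [Finsupp.tsub_apply]

lemma taylorCoeff_zero (f : MvPolynomial (Fin (n + 1)) R) : taylorCoeff 0 f = f := by
  conv_rhs => rw [← support_sum_monomial_coeff f]
  refine Finset.sum_congr rfl fun d _ => ?_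
  simp

lemma prod_add_pow_eq_sum_Iic (d : Fin (n + 1) →₀ ℕ) (x y : Fin (n + 1) → R) :
    ∏ j, (x j + y j) ^ d j = ∑ i ∈ Finset.Iic d,
      (∏ j, ((d j).choose (i j) : R)) * (∏ j, x j ^ (d j - i j)) * ∏ j, y j ^ i j := by
  calc ∏ j, (x j + y j) ^ d j
      = ∑ g ∈ Fintype.piFinset fun j => Finset.range (d j + 1),
          ∏ j, (y j ^ g j * x j ^ (d j - g j) * ((d j).choose (g j) : R)) := by
        simp_rw [add_comm (x _), add_pow]
        exact Finset.prod_univ_sum _ _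
    _ = ∑ i ∈ Finset.Iic d,
          ∏ j, (y j ^ i j * x j ^ (d j - i j) * ((d j).choose (i j) : R)) := by
        refine Finset.sum_nbij' Finsupp.equivFunOnFinite.symm (⇑) ?_ ?_ ?_ ?_ ?_
        · intro g hg
          simp only [Fintype.mem_piFinset, Finset.mem_range] at hg
          simpa [Finsupp.le_def, Nat.lt_succ_iff] using hg
        · intro i hi
          simp only [Finset.mem_Iic, Finsupp.le_def] at hi
          simpa [Nat.lt_succ_iff] using hi
        all_goals intros; simp
    _ = _ := by
        refine Finset.sum_congr rfl fun i _ => ?_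
        rw [← Finset.prod_mul_distrib, ← Finset.prod_mul_distrib]
        exact Finset.prod_congr rfl fun j _ => by ring

lemma eval_add_eq_sum_taylorCoeff (f : MvPolynomial (Fin (n + 1)) R)
    {S : Finset (Fin (n + 1) →₀ ℕ)} (hS : ∀ d ∈ f.support, Finset.Iic d ⊆ S)
    (x y : Fin (n + 1) → R) :
    eval (x + y) f = ∑ i ∈ S, eval x (taylorCoeff i f) * ∏ j, y j ^ i j := by
  simp_rw [eval_taylorCoeff, Finset.sum_mul]
  rw [Finset.sum_comm, eval_eq']
  refine Finset.sum_congr rfl fun d hd => ?_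
  -- the terms with `i ≰ d` vanish because some binomial coefficient does
  rw [← Finset.sum_subset (hS d hd) fun i _ hi => ?_, Pi.add_def,
    prod_add_pow_eq_sum_Iic, Finset.mul_sum]
  · exact Finset.sum_congr rfl fun i _ => by ring
  · rw [Finset.mem_Iic, Finsupp.le_def, not_forall] at hi
    obtain ⟨j, hj⟩ := hi
    have hzero : ((d j).choose (i j) : R) = 0 := by
      rw [Nat.choose_eq_zero_of_lt (not_le.mp hj), Nat.cast_zero]
    rw [Finset.prod_eq_zero (Finset.mem_univ j) hzero]
    ring

lemma exists_eval_add_eq_linear_add_higher (f : MvPolynomial (Fin (n + 1)) R)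
    (x y : Fin (n + 1) → R) :
    ∃ T : Finset (Fin (n + 1) →₀ ℕ), (∀ i ∈ T, 2 ≤ i.degree) ∧
      eval (x + y) f = eval x f + ∑ l, eval x (taylorCoeff (Finsupp.single l 1) f) * y l
        + ∑ i ∈ T, eval x (taylorCoeff i f) * ∏ j, y j ^ i j := by
  classical
  set L : Finset (Fin (n + 1) →₀ ℕ) := insert 0 (Finset.univ.image (Finsupp.single · 1))
  set S := f.support.biUnion Finset.Iic ∪ L
  have hL : S.filter (fun i => i.degree ≤ 1) = L := by
    ext i
    simp only [Finset.mem_filter, S, Finset.mem_union, L]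
    constructor
    · rintro ⟨-, hi⟩
      rcases Nat.le_one_iff_eq_zero_or_eq_one.mp hi with h | h
      · exact Finset.mem_insert.mpr (Or.inl ((Finsupp.degree_eq_zero_iff i).mp h))
      · obtain ⟨l, rfl⟩ := (Finsupp.sum_eq_one_iff i).mp h
        simp
    · intro hi
      refine ⟨Or.inr hi, ?_⟩
      simp only [Finset.mem_insert, Finset.mem_image] at hi
      rcases hi with rfl | ⟨l, -, rfl⟩ <;> simp
  refine ⟨S.filter (fun i => ¬ i.degree ≤ 1),
    fun i hi => not_le.mp (Finset.mem_filter.mp hi).2, ?_⟩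
  have hS : ∀ d ∈ f.support, Finset.Iic d ⊆ S := fun d hd =>
    Finset.subset_union_left.trans' (Finset.subset_biUnion_of_mem _ hd)
  rw [eval_add_eq_sum_taylorCoeff f hS,
    ← Finset.sum_filter_add_sum_filter_not S (fun i => i.degree ≤ 1), hL,
    Finset.sum_insert, Finset.sum_image, taylorCoeff_zero]
  · simp [Finsupp.single_apply]
  · exact fun l _ l' _ h => Finsupp.single_left_injective one_ne_zero h
  · simp

end Taylor

lemma _root_.WithTop.lt_add_of_pos_right {α : Type*} [AddMonoid α] [LT α] [AddLeftStrictMono α]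
    {x y : WithTop α} (hx : x ≠ ⊤) (hy : 0 < y) : x < x + y := by
  simpa using WithTop.add_lt_add_left hx hy

section AddValuation

open MvPolynomial

variable {R Γ₀ : Type*} [CommRing R] [LinearOrderedAddCommMonoidWithTop Γ₀]
  (v : AddValuation R Γ₀) {n : ℕ}

theorem _root_.AddValuation.map_prod {ι : Type*} (s : Finset ι) (g : ι → R) :
    v (∏ i ∈ s, g i) = ∑ i ∈ s, v (g i) := by
  classical
  induction s using Finset.induction_on with
  | empty => simp
  | insert a s ha ih => rw [Finset.prod_insert ha, Finset.sum_insert ha, v.map_mul, ih]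

theorem _root_.AddValuation.map_natCast_nonneg (m : ℕ) : 0 ≤ v (m : R) := by
  induction m with
  | zero => simp
  | succ m ih => exact Nat.cast_succ (R := R) m ▸ v.map_le_add ih v.map_one.ge

lemma degree_nsmul_le_map_prod_pow {γ : Γ₀} {y : Fin (n + 1) → R} (hy : ∀ j, γ ≤ v (y j))
    (i : Fin (n + 1) →₀ ℕ) : i.degree • γ ≤ v (∏ j, y j ^ i j) := by
  rw [v.map_prod, Finsupp.degree_eq_sum, Finset.sum_smul]
  exact Finset.sum_le_sum fun j _ => v.map_pow _ _ ▸ nsmul_le_nsmul_right (hy j) _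

lemma map_eval_nonneg {f : MvPolynomial (Fin (n + 1)) R} (hf : ∀ d, 0 ≤ v (f.coeff d))
    {x : Fin (n + 1) → R} (hx : ∀ j, 0 ≤ v (x j)) : 0 ≤ v (eval x f) := by
  rw [eval_eq']
  refine v.map_le_sum fun d _ => ?_
  rw [v.map_mul]
  have hprod := degree_nsmul_le_map_prod_pow v hx d
  rw [smul_zero] at hprod
  exact add_nonneg (hf d) hprod

lemma map_coeff_taylorCoeff_nonneg {f : MvPolynomial (Fin (n + 1)) R}
    (hf : ∀ d, 0 ≤ v (f.coeff d)) (i e : Fin (n + 1) →₀ ℕ) :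
    0 ≤ v ((taylorCoeff i f).coeff e) := by
  rw [taylorCoeff, coeff_sum]
  refine v.map_le_sum fun d _ => ?_
  rw [coeff_monomial]
  split_ifs
  · rw [v.map_mul, ← Nat.cast_prod]
    exact add_nonneg (v.map_natCast_nonneg _) (hf d)
  · simp

lemma exists_eval_add_eq_linear_add_remainder {f : MvPolynomial (Fin (n + 1)) R}
    (hf : ∀ d, 0 ≤ v (f.coeff d)) {x y : Fin (n + 1) → R} (hx : ∀ j, 0 ≤ v (x j))
    {γ : Γ₀} (hγ : 0 ≤ γ) (hy : ∀ j, γ ≤ v (y j)) :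
    ∃ r, eval (x + y) f = eval x f
        + ∑ l, eval x (taylorCoeff (Finsupp.single l 1) f) * y l + r ∧ 2 • γ ≤ v r := by
  obtain ⟨T, hT, heq⟩ := exists_eval_add_eq_linear_add_higher f x y
  refine ⟨_, heq, v.map_le_sum fun i hi => ?_⟩
  rw [v.map_mul]
  calc 2 • γ ≤ i.degree • γ := nsmul_le_nsmul_left hγ (hT i hi)
    _ ≤ v (∏ j, y j ^ i j) := degree_nsmul_le_map_prod_pow v hy i
    _ ≤ _ := le_add_of_nonneg_left
        (map_eval_nonneg v (map_coeff_taylorCoeff_nonneg v hf i) hx)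

end AddValuation

section ValuedDiffField

open MvPolynomial

variable {K : Type u} {Γ : Type v} {k : Type w}
  [Field K] [AddCommGroup Γ] [LinearOrder Γ] [IsOrderedAddMonoid Γ] [Field k]

namespace ValuedField

variable (M : ValuedField K Γ k)

lemma v_one : M.v 1 = 0 := by
  have hne : M.v 1 ≠ ⊤ := fun h => one_ne_zero ((M.v_top_iff 1).mp h)
  refine (WithTop.add_left_cancel hne ?_).symm
  rw [add_zero, ← M.v_mul, one_mul]

def addValuation : AddValuation K (WithTop Γ) :=
  AddValuation.of M.v ((M.v_top_iff 0).mpr rfl) M.v_one M.v_add M.v_mul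

@[simp]
lemma addValuation_apply (x : K) : M.addValuation x = M.v x := rfl

lemma v_neg (x : K) : M.v (-x) = M.v x := M.addValuation.map_neg x

lemma v_sub_comm (x y : K) : M.v (x - y) = M.v (y - x) := M.addValuation.map_sub_swap x y

lemma π_zero : M.π 0 = 0 :=
  (M.π_eq_zero_iff 0 (by simp [← addValuation_apply])).mpr (by simp [← addValuation_apply])

lemma π_sum {ι : Type*} (s : Finset ι) (g : ι → K) (hg : ∀ i ∈ s, 0 ≤ M.v (g i)) :
    M.π (∑ i ∈ s, g i) = ∑ i ∈ s, M.π (g i) := by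
  classical
  induction s using Finset.induction_on with
  | empty => simp [π_zero]
  | insert a s ha ih =>
    simp only [Finset.forall_mem_insert] at hg
    rw [Finset.sum_insert ha, Finset.sum_insert ha, M.π_add _ _ hg.1
      (M.addValuation.map_le_sum hg.2), ih hg.2]

lemma exists_v_nonneg_π_eq (y : k) : ∃ u, 0 ≤ M.v u ∧ M.π u = y := by
  by_cases hy : y = 0
  · exact ⟨0, by simp [← addValuation_apply], hy ▸ M.π_zero⟩
  · obtain ⟨u, rfl⟩ := M.π_surj y
    exact ⟨u, not_not.mp fun h => hy (M.π_junk u h), rfl⟩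

end ValuedField

namespace ValuedDiffField

variable (M : ValuedDiffField K Γ k)

lemma v_iterate_σ (j : ℕ) (x : K) : M.v ((⇑M.σ)^[j] x) = M.v x := by
  induction j with
  | zero => rfl
  | succ j ih => rw [Function.iterate_succ_apply', M.v_σ, ih]

lemma π_iterate_σ (j : ℕ) (x : K) : M.π ((⇑M.σ)^[j] x) = (⇑M.σr)^[j] (M.π x) := by
  induction j with
  | zero => rfl
  | succ j ih => rw [Function.iterate_succ_apply', Function.iterate_succ_apply', M.π_σ, ih]

end ValuedDiffField

variable {M : ValuedDiffField K Γ k} {n : ℕ} {f : MvPolynomial (Fin (n + 1)) K}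

lemma CoeffsInO.taylorCoeff_single (hf : CoeffsInO M.toValuedField f) (l : Fin (n + 1)) :
    CoeffsInO M.toValuedField (VDFPaper.taylorCoeff (Finsupp.single l 1) f) :=
  map_coeff_taylorCoeff_nonneg M.addValuation hf _

lemma CoeffsInO.v_evalDiff_nonneg (hf : CoeffsInO M.toValuedField f) {a : K}
    (ha : 0 ≤ M.v a) :
    0 ≤ M.v (evalDiff M.σ f a) :=
  map_eval_nonneg M.addValuation hf fun j => ha.trans (M.v_iterate_σ j a).ge

lemma CoeffsInO.exists_evalDiff_add_eq (hf : CoeffsInO M.toValuedField f) {a c : K}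
    (ha : 0 ≤ M.v a) (hc : 0 ≤ M.v c) :
    ∃ r, evalDiff M.σ f (a + c) = evalDiff M.σ f a
        + ∑ l : Fin (n + 1), evalDiff M.σ (taylorCoeff (Finsupp.single l 1) f) a * (⇑M.σ)^[l] c
        + r ∧ 2 • M.v c ≤ M.v r := by
  have hsplit : (fun j : Fin (n + 1) => (⇑M.σ)^[j] (a + c))
      = (fun j : Fin (n + 1) => (⇑M.σ)^[j] a) + fun j : Fin (n + 1) => (⇑M.σ)^[j] c := by
    funext j
    simp [← RingAut.coe_pow]
  unfold evalDiff
  rw [hsplit]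
  exact exists_eval_add_eq_linear_add_remainder M.addValuation hf
    (fun j => ha.trans (M.v_iterate_σ j a).ge) hc fun j => (M.v_iterate_σ j c).ge

lemma CoeffsInO.v_sub_le_v_evalDiff_sub (hf : CoeffsInO M.toValuedField f) {a b : K}
    (ha : 0 ≤ M.v a) (hb : 0 ≤ M.v b) :
    M.v (b - a) ≤ M.v (evalDiff M.σ f b - evalDiff M.σ f a) := by
  have hba : 0 ≤ M.v (b - a) := M.addValuation.map_le_sub hb ha
  obtain ⟨r, heq, hr⟩ := hf.exists_evalDiff_add_eq ha hba
  rw [add_sub_cancel] at heq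
  rw [heq, add_assoc, add_sub_cancel_left]
  refine M.addValuation.map_le_add (M.addValuation.map_le_sum fun l _ => ?_) ?_
  · rw [ValuedField.addValuation_apply, M.v_mul, M.v_iterate_σ]
    exact le_add_of_nonneg_left ((hf.taylorCoeff_single _).v_evalDiff_nonneg ha)
  · exact le_trans (two_nsmul (M.v (b - a)) ▸ le_add_of_nonneg_left hba) hr

end ValuedDiffField

section Newton

variable {K : Type u} {Γ : Type v} {k : Type w}
  [Field K] [AddCommGroup Γ] [LinearOrder Γ] [IsOrderedAddMonoid Γ] [Field k]
  {M : ValuedDiffField K Γ k} {n : ℕ} {f : MvPolynomial (Fin (n + 1)) K} {a b : K}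

lemma CoeffsInO.vG1min_eq_zero_iff (hf : CoeffsInO M.toValuedField f) (ha : 0 ≤ M.v a) :
    vG1min M f a = 0 ↔
      ∃ l, M.v (evalDiff M.σ (taylorCoeff (Finsupp.single l 1) f) a) = 0 := by
  obtain ⟨l₀, -, hl₀⟩ := Finset.exists_mem_eq_inf Finset.univ Finset.univ_nonempty
    fun l : Fin (n + 1) => M.v (evalDiff M.σ (taylorCoeff (Finsupp.single l 1) f) a)
  rw [vG1min, hl₀]
  refine ⟨fun h => ⟨l₀, h⟩, fun ⟨l, hl⟩ => le_antisymm ?_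
    ((hf.taylorCoeff_single l₀).v_evalDiff_nonneg ha)⟩
  exact hl₀ ▸ hl ▸ Finset.inf_le (Finset.mem_univ l)

lemma Axiom4n.exists_v_one_add_sum_pos (h4 : Axiom4n M n) {β : Fin (n + 1) → K}
    (hβ : ∀ l, 0 ≤ M.v (β l)) (hβ0 : ∃ l, M.v (β l) = 0) :
    ∃ u, 0 ≤ M.v u ∧ 0 < M.v (1 + ∑ l : Fin (n + 1), β l * (⇑M.σ)^[l] u) := by
  obtain ⟨l₀, hl₀⟩ := hβ0
  obtain ⟨y, hy⟩ := h4 (fun l => M.π (β l))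
    ⟨l₀, fun h => ((M.π_eq_zero_iff _ (hβ l₀)).mp h).ne' hl₀⟩
  obtain ⟨u, hu, rfl⟩ := M.exists_v_nonneg_π_eq y
  have hterm : ∀ l : Fin (n + 1), 0 ≤ M.v (β l * (⇑M.σ)^[l] u) := fun l => by
    rw [M.v_mul, M.v_iterate_σ]
    exact add_nonneg (hβ l) hu
  have hsum : 0 ≤ M.v (∑ l : Fin (n + 1), β l * (⇑M.σ)^[l] u) :=
    M.addValuation.map_le_sum fun l _ => hterm l
  refine ⟨u, hu, (M.π_eq_zero_iff _ (M.addValuation.map_le_add M.v_one.ge hsum)).mp ?_⟩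
  rw [M.π_add _ _ M.v_one.ge hsum, M.π_one, M.π_sum _ _ fun l _ => hterm l, ← hy]
  congr 1
  refine Finset.sum_congr rfl fun l _ => ?_
  rw [M.π_mul _ _ (hβ l) (hu.trans (M.v_iterate_σ l u).ge), M.π_iterate_σ]

def IsNewtonStep (M : ValuedDiffField K Γ k) (f : MvPolynomial (Fin (n + 1)) K) (a b : K) :
    Prop :=
  M.v (evalDiff M.σ f a) ≤ M.v (a - b) ∧ M.v (evalDiff M.σ f a) < M.v (evalDiff M.σ f b)

lemma SigmaHenselAt.exists_isNewtonStep (hH : SigmaHenselAt M f a) (h4 : Axiom4n M n)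
    (hf : CoeffsInO M.toValuedField f) (ha : 0 ≤ M.v a) (hne : evalDiff M.σ f a ≠ 0) :
    ∃ b, IsNewtonStep M f a b := by
  unfold IsNewtonStep
  set g := evalDiff M.σ f a
  set A : Fin (n + 1) → K := fun l => evalDiff M.σ (taylorCoeff (Finsupp.single l 1) f) a
  have hg : M.v g ≠ ⊤ := fun h => hne ((M.v_top_iff g).mp h)
  set β : Fin (n + 1) → K := fun l => A l * (⇑M.σ)^[l] g / g
  have hβ : ∀ l, M.v (β l) = M.v (A l) := fun l => by
    refine WithTop.add_right_cancel hg ?_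
    rw [← M.v_mul, div_mul_cancel₀ _ hne, M.v_mul, M.v_iterate_σ]
  obtain ⟨l₀, hl₀⟩ := (hf.vG1min_eq_zero_iff ha).mp hH.2
  obtain ⟨u, hu, hw⟩ := h4.exists_v_one_add_sum_pos (β := β)
    (fun l => hβ l ▸ (hf.taylorCoeff_single l).v_evalDiff_nonneg ha) ⟨l₀, (hβ l₀).trans hl₀⟩
  have hc : M.v g ≤ M.v (g * u) := by
    rw [M.v_mul]
    exact le_add_of_nonneg_right hu
  obtain ⟨r, hGb, hr⟩ := hf.exists_evalDiff_add_eq ha (hH.1.le.trans hc)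
  have hlin : ∑ l : Fin (n + 1), A l * (⇑M.σ)^[l] (g * u)
      = g * ∑ l : Fin (n + 1), β l * (⇑M.σ)^[l] u := by
    rw [Finset.mul_sum]
    refine Finset.sum_congr rfl fun l _ => ?_
    rw [← RingAut.coe_pow, map_mul]
    simp only [β, RingAut.coe_pow]
    field_simp
  have hGb' : evalDiff M.σ f (a + g * u)
      = g * (1 + ∑ l : Fin (n + 1), β l * (⇑M.σ)^[l] u) + r := by
    rw [hGb, hlin, mul_one_add]
  refine ⟨a + g * u, by rwa [sub_add_cancel_left, M.v_neg], ?_⟩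
  rw [hGb']
  refine M.addValuation.map_lt_add ?_ ?_
  · rw [ValuedField.addValuation_apply, M.v_mul]
    exact WithTop.lt_add_of_pos_right hg hw
  · calc M.v g < M.v g + M.v g := WithTop.lt_add_of_pos_right hg hH.1
      _ = 2 • M.v g := (two_nsmul _).symm
      _ ≤ 2 • M.v (g * u) := nsmul_le_nsmul_right hc 2
      _ ≤ M.v r := hr

lemma IsNewtonStep.v_nonneg (h : IsNewtonStep M f a b) (ha : 0 ≤ M.v a)
    (hpos : 0 < M.v (evalDiff M.σ f a)) : 0 ≤ M.v b := by
  simpa using M.addValuation.map_le_sub ha (hpos.le.trans h.1)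

lemma IsNewtonStep.v_sub_eq (h : IsNewtonStep M f a b) (hf : CoeffsInO M.toValuedField f)
    (ha : 0 ≤ M.v a) (hpos : 0 < M.v (evalDiff M.σ f a)) :
    M.v (a - b) = M.v (evalDiff M.σ f a) := by
  refine le_antisymm ?_ h.1
  calc M.v (a - b) = M.v (b - a) := M.v_sub_comm a b
    _ ≤ M.v (evalDiff M.σ f b - evalDiff M.σ f a) :=
        hf.v_sub_le_v_evalDiff_sub ha (h.v_nonneg ha hpos)
    _ = M.v (evalDiff M.σ f a) := M.addValuation.map_sub_eq_of_lt_right h.2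

lemma IsNewtonStep.sigmaHenselAt (h : IsNewtonStep M f a b) (hf : CoeffsInO M.toValuedField f)
    (ha : 0 ≤ M.v a) (hH : SigmaHenselAt M f a) : SigmaHenselAt M f b := by
  have hb := h.v_nonneg ha hH.1
  refine ⟨hH.1.trans h.2, (hf.vG1min_eq_zero_iff hb).mpr ?_⟩
  obtain ⟨l, hl⟩ := (hf.vG1min_eq_zero_iff ha).mp hH.2
  refine ⟨l, hl ▸ M.addValuation.map_eq_of_lt_sub ?_⟩
  calc M.addValuation (evalDiff M.σ (taylorCoeff (Finsupp.single l 1) f) a) = 0 := hl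
    _ < M.v (evalDiff M.σ f a) := hH.1
    _ = M.v (b - a) := (h.v_sub_eq hf ha hH.1).symm.trans (M.v_sub_comm a b)
    _ ≤ _ := (hf.taylorCoeff_single l).v_sub_le_v_evalDiff_sub ha hb

end Newton

/-- Lemma 5.2 ("newton"): Newton–Hensel approximation step. -/
theorem stmt8 {K : Type u} {Γ : Type v} {k : Type w}
    [Field K] [AddCommGroup Γ] [LinearOrder Γ] [IsOrderedAddMonoid Γ] [Field k]
    (M : ValuedDiffField K Γ k) (n : ℕ) (h4 : Axiom4n M n)
    (f : MvPolynomial (Fin (n + 1)) K) (hf : CoeffsInO M.toValuedField f)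
    (a : K) (ha : 0 ≤ M.v a) (hH : SigmaHenselAt M f a)
    (hne : evalDiff (⇑M.σ) f a ≠ 0) :
    (∃ b : K, M.v (evalDiff (⇑M.σ) f a) ≤ M.v (a - b) ∧
      M.v (evalDiff (⇑M.σ) f a) < M.v (evalDiff (⇑M.σ) f b)) ∧
    (∀ b : K, M.v (evalDiff (⇑M.σ) f a) ≤ M.v (a - b) →
      M.v (evalDiff (⇑M.σ) f a) < M.v (evalDiff (⇑M.σ) f b) →
      M.v (a - b) = M.v (evalDiff (⇑M.σ) f a) ∧ SigmaHenselAt M f b) := by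
  refine ⟨hH.exists_isNewtonStep h4 hf ha hne, fun b hab hGb => ?_⟩
  have hstep : IsNewtonStep M f a b := ⟨hab, hGb⟩
  exact ⟨hstep.v_sub_eq hf ha hH.1, hstep.sigmaHenselAt hf ha hH⟩

end VDFPaper
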